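/- arXiv:1807.04155 — 4 statements merged into one kernel-verified Lean document; each statement's English description precedes it below -/
import Mathlib

section
/- Let G be an abelian group, S : ℕ → ℕ, s(n) = ∏_{i=0}^n S(i), and let G' be the direct limit of the sequence G →(·s(0)) G →(·s(1)) ⋯ with η : G → G' the canonical map from the 0-th stage. Then for every group H that is uniquely S(k)-divisible for all k, precomposition with η gives a bijection Hom(G', H) ≅ Hom(G, H). -/
/-- Multiplication by a natural number `c` as an additive homomorphism. -/
def mulBy (G : Type*) [AddCommGroup G] (c : ℕ) : G →+ G :=
  AddMonoidHom.mk' (fun g => c • g) fun a b => smul_add c a b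

/-- `sProd S n = ∏_{i=0}^{n} S i`. -/
def sProd (S : ℕ → ℕ) (n : ℕ) : ℕ := ∏ i ∈ Finset.range (n + 1), S i

/-- The transition maps of the sequential diagram `G → G → G → ⋯` whose `n`-th map is
multiplication by `s n`; the composite from stage `i` to stage `j` is multiplication by
`∏_{t=i}^{j-1} s t`. -/
def transMap (G : Type*) [AddCommGroup G] (s : ℕ → ℕ) : ∀ i j : ℕ, i ≤ j → (G →+ G) :=
  fun i j _ => mulBy G (∏ t ∈ Finset.Ico i j, s t)

instance transMap.directedSystem (G : Type*) [AddCommGroup G] (s : ℕ → ℕ) :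
    DirectedSystem (fun _ : ℕ => G) fun i j h => transMap G s i j h where
  map_self i x := by simp [transMap, mulBy]
  map_map {k j i} hij hjk x := by
    simp only [transMap, mulBy, AddMonoidHom.mk'_apply, smul_smul]
    rw [mul_comm, Finset.prod_Ico_consecutive _ hij hjk]

/-!
Injectivity: every element of the colimit is `of n g`, and `of n (d • g) = of 0 g` where `d` is
the degree of the composite map from stage `0` to stage `n`; since `H` is uniquely
`d`-divisible, a homomorphism is determined by its value on `of 0 g`.

Surjectivity: `H` need not be abelian, so a homomorphism `φ : G → H` is first corestricted to
the subgroup `K` of elements having a power, with an exponent at which `H` is uniquely divisible,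
in the abelian subgroup `φ(G)`. If `x ^ n` and `y ^ n` commute and `n`-th powers are injective,
then `x` and `y` commute; hence `K` is abelian, and it is uniquely divisible by every degree. The
universal property of the colimit of abelian groups now extends `φ` into `K`.
-/

open Function

section Roots

variable {H : Type*} [Group H]

theorem Commute.of_pow_left {n : ℕ} (hn : Injective fun h : H => h ^ n) {x y : H}
    (h : Commute (x ^ n) y) : Commute x y := by
  have hconj : y * x * y⁻¹ = x := hn (by simp only [conj_pow, h.symm.eq, mul_inv_cancel_right])
  exact (mul_inv_eq_iff_eq_mul.mp hconj).symm

theorem Commute.of_pow_pow {n : ℕ} (hn : Injective fun h : H => h ^ n) {x y : H}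
    (h : Commute (x ^ n) (y ^ n)) : Commute x y :=
  (h.symm.of_pow_left hn).symm.of_pow_left hn

variable (H) in
def powBijectiveExponents : Submonoid ℕ where
  carrier := {e | Bijective fun h : H => h ^ e}
  one_mem' := by
    show Bijective fun h : H => h ^ 1
    simp only [pow_one]
    exact bijective_id
  mul_mem' {a b} ha hb := by
    show Bijective fun h : H => h ^ (a * b)
    simp only [pow_mul]
    exact hb.comp ha

namespace Subgroup

variable (A : Subgroup H) [IsMulCommutative A]

def rootSet : Set H := {h | ∃ e ∈ powBijectiveExponents H, h ^ e ∈ A}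

theorem commute_of_mem_rootSet {x y : H} (hx : x ∈ A.rootSet) (hy : y ∈ A.rootSet) :
    Commute x y := by
  obtain ⟨e₁, he₁, hx⟩ := hx
  obtain ⟨e₂, he₂, hy⟩ := hy
  refine Commute.of_pow_pow (mul_mem he₁ he₂).injective ?_
  rw [pow_mul, mul_comm, pow_mul]
  exact setLike_mul_comm (pow_mem hx e₂) (pow_mem hy e₁)

def rootClosure : Subgroup H where
  carrier := A.rootSet
  one_mem' := ⟨1, one_mem _, by simpa only [pow_one] using A.one_mem⟩
  mul_mem' {x y} hx hy := by
    obtain ⟨e₁, he₁, hx'⟩ := hx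
    obtain ⟨e₂, he₂, hy'⟩ := hy
    refine ⟨e₁ * e₂, mul_mem he₁ he₂, ?_⟩
    rw [(A.commute_of_mem_rootSet ⟨e₁, he₁, hx'⟩ ⟨e₂, he₂, hy'⟩).mul_pow, pow_mul,
      mul_comm, pow_mul]
    exact A.mul_mem (pow_mem hx' e₂) (pow_mem hy' e₁)
  inv_mem' {x} := fun ⟨e, he, hx⟩ => ⟨e, he, by simpa only [inv_pow] using A.inv_mem hx⟩

instance : IsMulCommutative A.rootClosure :=
  .of_setLike_mul_comm fun _ hx _ hy => (A.commute_of_mem_rootSet hx hy).eq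

theorem le_rootClosure : A ≤ A.rootClosure :=
  fun x hx => ⟨1, one_mem _, by simpa only [pow_one] using hx⟩

theorem pow_bijective_rootClosure {e : ℕ} (he : e ∈ powBijectiveExponents H) :
    Bijective fun k : A.rootClosure => k ^ e := by
  refine ⟨fun k₁ k₂ hk => Subtype.ext (he.injective (congrArg Subtype.val hk)), ?_⟩
  rintro ⟨k, f, hf, hk⟩
  obtain ⟨r, rfl⟩ := he.surjective k
  exact ⟨⟨r, e * f, mul_mem he hf, by rwa [pow_mul]⟩, rfl⟩

end Subgroup

end Roots

section SequentialLimit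

abbrev SeqLimit (G : Type*) [AddCommGroup G] (s : ℕ → ℕ) : Type _ :=
  AddCommGroup.DirectLimit (fun _ : ℕ => G) (transMap G s)

noncomputable abbrev SeqLimit.of (G : Type*) [AddCommGroup G] (s : ℕ → ℕ) (n : ℕ) :
    G →+ SeqLimit G s :=
  AddCommGroup.DirectLimit.of (fun _ : ℕ => G) (transMap G s) n

variable {G : Type*} [AddCommGroup G] (s : ℕ → ℕ)

def stageDegree (n : ℕ) : ℕ := ∏ t ∈ Finset.range n, s t

theorem stageDegree_mul_prod_Ico {i j : ℕ} (hij : i ≤ j) :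
    stageDegree s i * ∏ t ∈ Finset.Ico i j, s t = stageDegree s j :=
  Finset.prod_range_mul_prod_Ico s hij

theorem SeqLimit.of_stageDegree_nsmul (n : ℕ) (g : G) :
    SeqLimit.of G s n (stageDegree s n • g) = SeqLimit.of G s 0 g := by
  have := AddCommGroup.DirectLimit.of_f (G := fun _ : ℕ => G) (f := transMap G s)
    (Nat.zero_le n) g
  rwa [transMap, mulBy, AddMonoidHom.mk'_apply, ← Finset.range_eq_Ico] at this

theorem SeqLimit.hom_ext {M : Type*} [AddMonoid M]
    (hM : ∀ n, Injective fun x : M => stageDegree s n • x) {f₁ f₂ : SeqLimit G s →+ M}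
    (h : f₁.comp (SeqLimit.of G s 0) = f₂.comp (SeqLimit.of G s 0)) : f₁ = f₂ := by
  ext x
  induction x using AddCommGroup.DirectLimit.induction_on with
  | ih n g =>
    apply hM n
    simp only [← map_nsmul, of_stageDegree_nsmul]
    exact DFunLike.congr_fun h g

theorem SeqLimit.exists_comp_of_zero_eq {A : Type*} [AddCommGroup A]
    (hA : ∀ n, Bijective fun a : A => stageDegree s n • a) (φ : G →+ A) :
    ∃ F : SeqLimit G s →+ A, F.comp (SeqLimit.of G s 0) = φ := by
  let root (n : ℕ) : A ≃+ A := (AddEquiv.ofBijective (mulBy A (stageDegree s n)) (hA n)).symm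
  have hroot (n : ℕ) (a : A) : stageDegree s n • root n a = a :=
    (AddEquiv.ofBijective (mulBy A (stageDegree s n)) (hA n)).apply_symm_apply a
  let ψ (n : ℕ) : G →+ A := (root n).toAddMonoidHom.comp φ
  have hψ (i j : ℕ) (hij : i ≤ j) (g : G) : ψ j (transMap G s i j hij g) = ψ i g := by
    apply (hA j).injective
    calc stageDegree s j • ψ j (transMap G s i j hij g)
        = (∏ t ∈ Finset.Ico i j, s t) • φ g := (hroot j _).trans (map_nsmul φ _ g)
      _ = (∏ t ∈ Finset.Ico i j, s t) • stageDegree s i • ψ i g := by rw [← hroot i (φ g)]; rfl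
      _ = stageDegree s j • ψ i g := by rw [smul_smul, mul_comm, stageDegree_mul_prod_Ico s hij]
  refine ⟨AddCommGroup.DirectLimit.lift _ _ _ ψ hψ, AddMonoidHom.ext fun g => ?_⟩
  rw [AddMonoidHom.comp_apply, AddCommGroup.DirectLimit.lift_of]
  show root 0 (φ g) = φ g
  simpa only [stageDegree, Finset.range_zero, Finset.prod_empty, one_smul] using hroot 0 (φ g)

end SequentialLimit

open scoped IsMulCommutative in
/-- If `H` is a group which is uniquely `S k`-divisible for every `k`, then precomposition
with the canonical map `η : G → G'` from the `0`-th stage into the direct limit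
`G' = colim (G →(·s 0) G →(·s 1) ⋯)` is a bijection `Hom(G', H) ≅ Hom(G, H)`. -/
theorem stmt4 (G : Type*) [AddCommGroup G] (S : ℕ → ℕ) (H : Type*) [Group H]
    (hH : ∀ k : ℕ, Function.Bijective fun h : H => h ^ S k) :
    Function.Bijective
      fun f : AddCommGroup.DirectLimit (fun _ : ℕ => G) (transMap G (sProd S)) →+ Additive H =>
        f.comp (AddCommGroup.DirectLimit.of (fun _ : ℕ => G) (transMap G (sProd S)) 0) := by
  have hdeg (n : ℕ) : stageDegree (sProd S) n ∈ powBijectiveExponents H :=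
    prod_mem fun i _ => prod_mem fun k _ => hH k
  refine ⟨fun f₁ f₂ h => SeqLimit.hom_ext _ (fun n => (hdeg n).injective) h, fun φ => ?_⟩
  let φ' := AddMonoidHom.toMultiplicativeLeft φ
  let K := φ'.range.rootClosure
  let φK : G →+ Additive K := MonoidHom.toAdditiveRight
    ((Subgroup.inclusion φ'.range.le_rootClosure).comp φ'.rangeRestrict)
  obtain ⟨F, hF⟩ :=
    SeqLimit.exists_comp_of_zero_eq _ (fun n => φ'.range.pow_bijective_rootClosure (hdeg n)) φK
  exact ⟨(MonoidHom.toAdditive K.subtype).comp F,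
    congrArg (MonoidHom.toAdditive K.subtype).comp hF⟩
end

section
/- Let K and L be reflectors onto full reflective subcategories of a category C. If for some object X, K L X is L-local and L K X is K-local, then L K X ≅ K L X. -/
open CategoryTheory

private lemma cancel_unit {C D : Type*} [Category C] [Category D] (i : D ⥤ C) [Reflective i]
    {Y : C} {B : D} {a b : i.obj ((reflector i).obj Y) ⟶ i.obj B}
    (h : (reflectorAdjunction i).unit.app Y ≫ a = (reflectorAdjunction i).unit.app Y ≫ b) :
    a = b := by
  obtain ⟨a', rfl⟩ := i.map_surjective a
  obtain ⟨b', rfl⟩ := i.map_surjective b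
  congr 1
  apply ((reflectorAdjunction i).homEquiv Y B).injective
  simpa [Adjunction.homEquiv_unit] using h

/-- If `K L X` is `L`-local and `L K X` is `K`-local, then `L K X ≅ K L X`. -/
theorem stmt9 {C DK DL : Type*} [Category C] [Category DK] [Category DL]
    (iK : DK ⥤ C) [Reflective iK] (iL : DL ⥤ C) [Reflective iL] (X : C)
    (h1 : iL.essImage ((reflector iK ⋙ iK).obj ((reflector iL ⋙ iL).obj X)))
    (h2 : iK.essImage ((reflector iL ⋙ iL).obj ((reflector iK ⋙ iK).obj X))) :
    Nonempty
      ((reflector iL ⋙ iL).obj ((reflector iK ⋙ iK).obj X) ≅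
        (reflector iK ⋙ iK).obj ((reflector iL ⋙ iL).obj X)) := by
  let K' := reflector iK ⋙ iK
  let L' := reflector iL ⋙ iL
  let ηK := (reflectorAdjunction iK).unit
  let ηL := (reflectorAdjunction iL).unit
  have hi1 : IsIso (ηL.app (K'.obj (L'.obj X))) := Functor.essImage.unit_isIso h1
  have hi2 : IsIso (ηK.app (L'.obj (K'.obj X))) := Functor.essImage.unit_isIso h2
  let f : L'.obj (K'.obj X) ⟶ K'.obj (L'.obj X) :=
    L'.map (K'.map (ηL.app X)) ≫ inv (ηL.app (K'.obj (L'.obj X)))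
  let g : K'.obj (L'.obj X) ⟶ L'.obj (K'.obj X) :=
    K'.map (L'.map (ηK.app X)) ≫ inv (ηK.app (L'.obj (K'.obj X)))
  have natL : ∀ {A B : C} (φ : A ⟶ B), ηL.app A ≫ L'.map φ = φ ≫ ηL.app B :=
    fun φ => (ηL.naturality φ).symm
  have natK : ∀ {A B : C} (φ : A ⟶ B), ηK.app A ≫ K'.map φ = φ ≫ ηK.app B :=
    fun φ => (ηK.naturality φ).symm
  -- idempotency of units
  have idemK : K'.map (ηK.app X) = ηK.app (K'.obj X) := (unit_obj_eq_map_unit iK X).symm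
  have idemL : L'.map (ηL.app X) = ηL.app (L'.obj X) := (unit_obj_eq_map_unit iL X).symm
  have hf : ηL.app (K'.obj X) ≫ f = K'.map (ηL.app X) := by
    show ηL.app (K'.obj X) ≫ L'.map (K'.map (ηL.app X)) ≫ inv (ηL.app (K'.obj (L'.obj X)))
      = K'.map (ηL.app X)
    rw [← Category.assoc, natL]
    simp [K', L']
  have hg : ηK.app (L'.obj X) ≫ g = L'.map (ηK.app X) := by
    show ηK.app (L'.obj X) ≫ K'.map (L'.map (ηK.app X)) ≫ inv (ηK.app (L'.obj (K'.obj X)))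
      = L'.map (ηK.app X)
    rw [← Category.assoc, natK]
    simp [K', L']
  have key1 : K'.map (ηL.app X) ≫ g = ηL.app (K'.obj X) := by
    show K'.map (ηL.app X) ≫ K'.map (L'.map (ηK.app X)) ≫ inv (ηK.app (L'.obj (K'.obj X)))
      = ηL.app (K'.obj X)
    rw [← Category.assoc, ← K'.map_comp, natL (A := X) (B := K'.obj X) (ηK.app X), K'.map_comp, idemK,
      natK (A := K'.obj X) (B := L'.obj (K'.obj X)) (ηL.app (K'.obj X))]
    simp [K', L']
  have key2 : L'.map (ηK.app X) ≫ f = ηK.app (L'.obj X) := by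
    show L'.map (ηK.app X) ≫ L'.map (K'.map (ηL.app X)) ≫ inv (ηL.app (K'.obj (L'.obj X)))
      = ηK.app (L'.obj X)
    rw [← Category.assoc, ← L'.map_comp, natK (A := X) (B := L'.obj X) (ηL.app X), L'.map_comp, idemL,
      natL (A := L'.obj X) (B := K'.obj (L'.obj X)) (ηK.app (L'.obj X))]
    simp [K', L']
  have hfg : f ≫ g = 𝟙 _ := by
    apply cancel_unit iL (Y := K'.obj X) (B := (reflector iL).obj (K'.obj X))
    rw [← Category.assoc]
    show (ηL.app (K'.obj X) ≫ f) ≫ g = ηL.app (K'.obj X) ≫ 𝟙 _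
    rw [hf, Category.comp_id, key1]
  have hgf : g ≫ f = 𝟙 _ := by
    apply cancel_unit iK (Y := L'.obj X) (B := (reflector iK).obj (L'.obj X))
    rw [← Category.assoc]
    show (ηK.app (L'.obj X) ≫ g) ≫ f = ηK.app (L'.obj X) ≫ 𝟙 _
    rw [hg, Category.comp_id, key2]
  exact ⟨⟨f, g, hfg, hgf⟩⟩
end

section
/- Let B be the abelian group of finitely/boundedly supported functions ℚ → ℚ (pointwise addition), on which ℚ acts by translation (r·f)(x) = f(x + r), and let P = B ⋊ ℚ be the semidirect product. Then the element (δ₀, 2) of P has no square root in P, where δ₀ is the indicator-like function with δ₀(0) = 1 and δ₀(x) = 0 for x ≠ 0. -/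
/-!
Squaring `(g, s)` gives `(g + s·g, 2s)`, so a square root of `(δ₀, 2)` has `s = 1` and
`g (x + 1) = -g x` for every `x ≠ 0`. Off the origin, `g` therefore alternates in sign along
the chains `1, 2, 3, …` and `-1, -2, -3, …`; as `g` vanishes far out, it vanishes at `1` and
`-1`, hence also at `0 = -1 + 1`. But then `g 0 + g 1 = δ₀ 0 = 1` is violated.
-/

theorem eq_zero_of_succ_eq_neg_of_eq_zero {G : Type*} [SubtractionMonoid G] {u : ℕ → G}
    (hu : ∀ n, u (n + 1) = -u n) {N : ℕ} (hN : u N = 0) : u 0 = 0 := by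
  induction N generalizing u with
  | zero => exact hN
  | succ N ih =>
    have h1 : u 1 = 0 := ih (u := fun n => u (n + 1)) (fun n => hu (n + 1)) hN
    rwa [hu 0, neg_eq_zero] at h1

section Archimedean

variable {K G : Type*} [CommRing K] [LinearOrder K] [IsStrictOrderedRing K] [Archimedean K]
  [SubtractionMonoid G] {g : K → G} {a b : K}

theorem eq_zero_of_add_one_eq_neg_of_eq_zero_of_gt (hg : ∀ x, a ≤ x → g (x + 1) = -g x)
    (hb : ∀ x, b < x → g x = 0) : g a = 0 := by
  obtain ⟨N, hN⟩ := exists_nat_gt (b - a)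
  have hshift : ∀ n : ℕ, g (a + ↑(n + 1)) = -g (a + n) := fun n => by
    rw [Nat.cast_succ, ← add_assoc]
    exact hg _ (le_add_of_nonneg_right n.cast_nonneg)
  simpa using eq_zero_of_succ_eq_neg_of_eq_zero (u := fun n : ℕ => g (a + n)) hshift
    (hb (a + N) (by linarith))

theorem eq_zero_of_add_one_eq_neg_of_eq_zero_of_lt (hg : ∀ x, x + 1 ≤ a → g (x + 1) = -g x)
    (hb : ∀ x, x < b → g x = 0) : g a = 0 := by
  have hreflect : ∀ x, -a ≤ x → g (-(x + 1)) = -g (-x) := fun x hx => by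
    have h : g (-x) = -g (-(x + 1)) := by
      convert hg (-(x + 1)) (by linarith) using 2
      ring
    exact (neg_eq_iff_eq_neg.mpr h).symm
  simpa using eq_zero_of_add_one_eq_neg_of_eq_zero_of_gt (g := fun x => g (-x)) hreflect
    (b := -b) (fun x hx => hb (-x) (by linarith))

end Archimedean

/-- In the semidirect product `P = B ⋊ ℚ`, where `B` is the group of boundedly supported
functions `ℚ → ℚ` and `ℚ` acts by translation, the element `(δ₀, 2)` has no square root:
there is no boundedly supported `g` and `s : ℚ` with
`(g, s)² = (g + s·g, s + s) = (δ₀, 2)`. -/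
theorem stmt14 :
    ¬ ∃ (g : ℚ → ℚ) (s : ℚ),
        (∃ b : ℚ, ∀ x : ℚ, b < x → g x = 0 ∧ g (-x) = 0) ∧
        (∀ x : ℚ, g x + g (x + s) = if x = 0 then 1 else 0) ∧
        s + s = 2 := by
  rintro ⟨g, s, ⟨b, hb⟩, hsq, hs⟩
  obtain rfl : s = 1 := by linarith
  have hshift : ∀ x ≠ 0, g (x + 1) = -g x := fun x hx =>
    eq_neg_of_add_eq_zero_right (by simpa [hx] using hsq x)
  have h1 : g 1 = 0 := eq_zero_of_add_one_eq_neg_of_eq_zero_of_gt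
    (fun x hx => hshift x (by linarith)) (fun x hx => (hb x hx).1)
  have hm1 : g (-1) = 0 := eq_zero_of_add_one_eq_neg_of_eq_zero_of_lt (b := -b)
    (fun x hx => hshift x (by linarith)) (fun x hx => by simpa using (hb (-x) (by linarith)).2)
  have h0 : g 0 = 0 := by simpa [hm1] using hshift (-1) (by norm_num)
  simpa [h0, h1] using hsq 0
end

section
/- Let P = B ⋊ ℚ be as above (B the boundedly supported functions ℚ → ℚ with translation action). Although B and ℚ are both uniquely k-divisible for every k ≥ 1, the group P is not uniquely 2-divisible. Hence an extension of uniquely 2-divisible groups need not be uniquely 2-divisible. -/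
/-- The abelian group of boundedly supported functions `ℚ → ℚ`. -/
def BddSupp : AddSubgroup (ℚ → ℚ) where
  carrier := {f | ∃ b : ℚ, ∀ x : ℚ, b < |x| → f x = 0}
  zero_mem' := ⟨0, fun _ _ => rfl⟩
  add_mem' := by
    rintro f g ⟨b1, h1⟩ ⟨b2, h2⟩
    exact ⟨max b1 b2, fun x hx => by
      simp [h1 x (lt_of_le_of_lt (le_max_left _ _) hx),
        h2 x (lt_of_le_of_lt (le_max_right _ _) hx)]⟩
  neg_mem' := by
    rintro f ⟨b, h⟩
    exact ⟨b, fun x hx => by simp [h x hx]⟩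

/-- Translation preserves bounded support. -/
theorem shiftMem (r : ℚ) (f : ℚ → ℚ) (hf : f ∈ BddSupp) :
    (fun x : ℚ => f (x + r)) ∈ BddSupp := by
  obtain ⟨b, h⟩ := hf
  refine ⟨b + |r|, fun x hx => h (x + r) ?_⟩
  have h1 : |x| ≤ |x + r| + |r| := by
    calc |x| = |(x + r) + (-r)| := by ring_nf
    _ ≤ |x + r| + |(-r)| := abs_add_le _ _
    _ = |x + r| + |r| := by rw [abs_neg]
  linarith

/-- The squaring map of the semidirect product `P = B ⋊ ℚ`, where `ℚ` acts on `B` by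
translation: `(f, r)² = (f + r·f, r + r)` with `(r·f) x = f (x + r)`. -/
def Psq (p : BddSupp × ℚ) : BddSupp × ℚ :=
  (⟨fun x => (p.1 : ℚ → ℚ) x + (p.1 : ℚ → ℚ) (x + p.2),
      add_mem p.1.2 (shiftMem p.2 _ p.1.2)⟩,
    p.2 + p.2)

theorem nsmul_bijective_of_ne_zero {V : Type*} [AddCommGroup V] [Module ℚ V] {k : ℕ}
    (hk : k ≠ 0) : Function.Bijective fun v : V => k • v := by
  convert (LinearEquiv.smulOfNeZero ℚ V k (Nat.cast_ne_zero.mpr hk)).bijective using 1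
  ext v
  simp [Nat.cast_smul_eq_nsmul]

theorem AddSubgroup.nsmul_bijective_of_rat_smul_mem {V : Type*} [AddCommGroup V] [Module ℚ V]
    (S : AddSubgroup V) (hS : ∀ (c : ℚ), ∀ v ∈ S, c • v ∈ S) {k : ℕ} (hk : k ≠ 0) :
    Function.Bijective fun v : S => k • v := by
  refine ⟨fun v w h => Subtype.ext <|
      (nsmul_bijective_of_ne_zero hk).1 (by simpa using congrArg Subtype.val h),
    fun w => ⟨⟨(k : ℚ)⁻¹ • w, hS _ _ w.2⟩, Subtype.ext ?_⟩⟩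
  simp [← Nat.cast_smul_eq_nsmul ℚ, smul_smul, hk]

theorem rat_smul_mem_BddSupp (c : ℚ) {f : ℚ → ℚ} (hf : f ∈ BddSupp) : c • f ∈ BddSupp := by
  obtain ⟨b, hb⟩ := hf
  exact ⟨b, fun x hx => by simp [hb x hx]⟩

theorem exists_nat_forall_le_abs_of_mem_BddSupp {f : ℚ → ℚ} (hf : f ∈ BddSupp) :
    ∃ N : ℕ, ∀ x : ℚ, N ≤ |x| → f x = 0 := by
  obtain ⟨b, hb⟩ := hf
  obtain ⟨N, hN⟩ := exists_nat_gt b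
  exact ⟨N, fun x hx => hb x (hN.trans_le hx)⟩

theorem eq_zero_of_add_succ_eq_zero {G : Type*} [AddGroup G] {g : ℕ → G}
    (hg : ∀ n, g n + g (n + 1) = 0) (N : ℕ) (hN : g N = 0) : g 0 = 0 := by
  induction N with
  | zero => exact hN
  | succ n ih => exact ih (by simpa [hN] using hg n)

def delta0 : BddSupp :=
  ⟨Pi.single 0 1, 0, fun _ hx => Pi.single_eq_of_ne (abs_pos.mp hx) 1⟩

/-- Writing `p = (f, r)`, a square root of `(δ₀, 2)` has `r = 1` and `f x + f (x + 1) = δ₀ x`;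
along `ℤ` this forces `f` to alternate in sign on each side of `0`, which bounded support only
allows if `f 0 = f 1 = 0`, contradicting `f 0 + f 1 = 1`. -/
theorem Psq_ne_delta0_two (p : BddSupp × ℚ) : Psq p ≠ (delta0, 2) := by
  obtain ⟨⟨f, hf⟩, r⟩ := p
  intro h
  have hr : r = 1 := by
    have := congrArg Prod.snd h
    simp only [Psq] at this
    linarith
  subst hr
  have hshift (x : ℚ) : f x + f (x + 1) = (Pi.single 0 1 : ℚ → ℚ) x :=
    congrArg (fun q : BddSupp × ℚ => (q.1 : ℚ → ℚ) x) h
  obtain ⟨N, hN⟩ := exists_nat_forall_le_abs_of_mem_BddSupp hf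
  have h1 : f 1 = 0 := by
    have hforward (n : ℕ) : f (1 + n) + f (1 + (n + 1 : ℕ)) = 0 := by
      have := hshift (1 + n)
      rw [Pi.single_eq_of_ne (by positivity)] at this
      convert this using 3
      push_cast
      ring
    simpa using eq_zero_of_add_succ_eq_zero hforward N
      (hN _ (by rw [abs_of_pos (by positivity)]; linarith))
  have h0 : f 0 = 0 := by
    have hbackward (n : ℕ) : f (-n) + f (-(n + 1 : ℕ)) = 0 := by
      have := hshift (-(n + 1))
      rw [Pi.single_eq_of_ne (neg_ne_zero.mpr (by positivity)), add_comm] at this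
      convert this using 3 <;> push_cast <;> ring
    simpa using eq_zero_of_add_succ_eq_zero hbackward N (hN _ (by simp))
  simpa [h0, h1] using hshift 0

/-- Although `B` (boundedly supported functions `ℚ → ℚ`) and `ℚ` are uniquely
`k`-divisible for all `k ≥ 1`, the semidirect product `P = B ⋊ ℚ` is not uniquely
2-divisible: its squaring map is not a bijection. -/
theorem stmt15 :
    (∀ k : ℕ, 1 ≤ k → Function.Bijective fun f : BddSupp => k • f) ∧
    (∀ k : ℕ, 1 ≤ k → Function.Bijective fun r : ℚ => k • r) ∧
    ¬ Function.Bijective Psq := by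
  refine ⟨fun k hk => BddSupp.nsmul_bijective_of_rat_smul_mem
      (fun c _ => rat_smul_mem_BddSupp c) (Nat.one_le_iff_ne_zero.mp hk),
    fun k hk => nsmul_bijective_of_ne_zero (Nat.one_le_iff_ne_zero.mp hk), fun h => ?_⟩
  obtain ⟨p, hp⟩ := h.2 (delta0, 2)
  exact Psq_ne_delta0_two p hp
end
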